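/- arXiv:2510.25854 — 2 statements merged into one kernel-verified Lean document; each statement's English description precedes it below -/
import Mathlib

section
/- Let n ≥ 3 and let g₁, g₂ be two-qubit unitaries in the Clifford group 𝒞₂. Suppose the 2n-qubit unitary that applies g₁ to qubits (1, n+1) (the two qubits of node 1), g₂ to qubits (2, n+2) (the two qubits of node 2), and identity elsewhere is GHZ-preserving. Then there exist a, b, c ∈ {0,1}, two-qubit Pauli strings Q₁, Q₂, and unit complex scalars λ₁, λ₂ such that g₁ = λ₁ Q₁ · CZ^a (S^b ⊗ S^c) and g₂ = λ₂ Q₂ · CZ^a (S^b ⊗ S^c) with the same exponents a, b, c. In particular, up to phases and Pauli factors the two bilocally applied gates must be identical and must belong to the group generated by CZ and the phase gates. -/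
/-!
Applied to `|GHZ⟩ ⊗ |GHZ⟩`, the bilocal gate has amplitude `g₁((a,c),(x,y)) g₂((b,d),(x,y)) / 2` at
the configuration carrying `a, b` (copy 1) and `c, d` (copy 2) on nodes 1, 2 and `x` (copy 1), `y`
(copy 2) elsewhere. On a product of two GHZ-basis states this amplitude is supported on
`a = x + s₁, b = x + s₂, c = y + r₁, d = y + r₂` with weight `Φ(x) Ψ(y)`, where `Φ(1) = ±Φ(0)` and
`Ψ(1) = ±Ψ(0)`. As columns of unitaries do not vanish, both gates are a Pauli `X`-shift times a
diagonal `Aᵢ`, and `A₁ A₂` is proportional to `(x, y) ↦ φ^x ψ^y` with `φ, ψ = ±1`.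

Conjugating `X ⊗ I` and `I ⊗ X` by a Clifford gate of this shape shows
`A(x, y) = A(0, 0) ρ^x σ^y ε^{xy}` with `ρ⁴ = σ⁴ = ε² = 1`. The product condition then says that
`ρ₁ρ₂`, `σ₁σ₂` are signs and `ε₁ = ε₂`, so `ρᵢ = ±i^b`, `σᵢ = ±i^c`, `εᵢ = (-1)^a` with common
`a, b, c`; the signs are Pauli `Z` factors, and what remains is the diagonal of `CZ^a (S^b ⊗ S^c)`.
-/

noncomputable section

/-- The state space of a register of qubits indexed by `ι`: `(ℂ²)^{⊗ι}`. -/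
abbrev QState (ι : Type) : Type := (ι → Fin 2) → ℂ

/-- Operators (matrices) on the state space of qubits indexed by `ι`. -/
abbrev QOp (ι : Type) : Type := Matrix (ι → Fin 2) (ι → Fin 2) ℂ

def pI : Matrix (Fin 2) (Fin 2) ℂ := 1

def pX : Matrix (Fin 2) (Fin 2) ℂ := !![0, 1; 1, 0]

def pY : Matrix (Fin 2) (Fin 2) ℂ := !![0, -Complex.I; Complex.I, 0]

def pZ : Matrix (Fin 2) (Fin 2) ℂ := !![1, 0; 0, -1]

/-- The single-qubit phase gate `S = diag(1, i)`. -/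
def sGate : Matrix (Fin 2) (Fin 2) ℂ := !![1, 0; 0, Complex.I]

def pauliSet : Set (Matrix (Fin 2) (Fin 2) ℂ) := {pI, pX, pY, pZ}

/-- The `n`-qubit GHZ state `(|0…0⟩ + |1…1⟩)/√2`. -/
def ghz (n : ℕ) : QState (Fin n) := fun f =>
  (Real.sqrt 2 : ℂ)⁻¹ *
    ((if f = (fun _ => (0 : Fin 2)) then 1 else 0) +
     (if f = (fun _ => (1 : Fin 2)) then 1 else 0))

/-- A single-qubit operator embedded at position `k` (identity elsewhere). -/
def embed1 {ι : Type} [Fintype ι] [DecidableEq ι] (k : ι)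
    (A : Matrix (Fin 2) (Fin 2) ℂ) : QOp ι := fun f g =>
  A (f k) (g k) * ∏ i ∈ Finset.univ.erase k, (if f i = g i then (1 : ℂ) else 0)

/-- Kronecker product of a family of single-qubit operators. -/
def kron {ι : Type} [Fintype ι] (P : ι → Matrix (Fin 2) (Fin 2) ℂ) : QOp ι :=
  fun f g => ∏ i, P i (f i) (g i)

/-- `M` is a Pauli string: a Kronecker product of Pauli matrices. -/
def IsPauliString {ι : Type} [Fintype ι] (M : QOp ι) : Prop :=
  ∃ P : ι → Matrix (Fin 2) (Fin 2) ℂ, (∀ i, P i ∈ pauliSet) ∧ M = kron P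

/-- `v` is a GHZ-basis state: the image of the GHZ state under a Pauli string. -/
def IsGHZBasis {n : ℕ} (v : QState (Fin n)) : Prop :=
  ∃ M : QOp (Fin n), IsPauliString M ∧ v = M.mulVec (ghz n)

/-- Inner product. -/
def qinner {ι : Type} [Fintype ι] [DecidableEq ι] (u v : QState ι) : ℂ :=
  ∑ f, star (u f) * v f

/-- Tensor product of two states of an `n`-qubit register, giving a state of the
`2n`-qubit system (copy 1 indexed by `Sum.inl`, copy 2 by `Sum.inr`). -/
def tensor2 {n : ℕ} (u v : QState (Fin n)) : QState (Fin n ⊕ Fin n) :=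
  fun f => u (fun i => f (Sum.inl i)) * v (fun i => f (Sum.inr i))

/-- A `2n`-qubit operator is GHZ-preserving if it maps any tensor product of two
GHZ-basis states to a unit scalar multiple of a tensor product of GHZ-basis states. -/
def GHZPreserving2 {n : ℕ} (U : QOp (Fin n ⊕ Fin n)) : Prop :=
  ∀ u v : QState (Fin n), IsGHZBasis u → IsGHZBasis v →
    ∃ u' v' : QState (Fin n), IsGHZBasis u' ∧ IsGHZBasis v' ∧
      ∃ lam : ℂ, ‖lam‖ = 1 ∧
        U.mulVec (tensor2 u v) = lam • tensor2 u' v'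

/-- Controlled-Z gate between qubits `p` and `q` (identity elsewhere). -/
def czMat {ι : Type} [Fintype ι] [DecidableEq ι] (p q : ι) : QOp ι :=
  Matrix.diagonal fun f => if f p = 1 ∧ f q = 1 then (-1 : ℂ) else 1

/-- Phase gate `S` on qubit `p` (identity elsewhere). -/
def sMat {ι : Type} [Fintype ι] [DecidableEq ι] (p : ι) : QOp ι :=
  Matrix.diagonal fun f => if f p = 1 then Complex.I else 1

/-- B-generator `CZ_{i,n+i} · CZ_{j,n+j}` on the two-copy system. -/
def bCZ {n : ℕ} (i j : Fin n) : QOp (Fin n ⊕ Fin n) :=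
  czMat (Sum.inl i : Fin n ⊕ Fin n) (Sum.inr i) *
    czMat (Sum.inl j : Fin n ⊕ Fin n) (Sum.inr j)

/-- B-generator `S_i · S_j` (phase gates on copy 1). -/
def bS₁ {n : ℕ} (i j : Fin n) : QOp (Fin n ⊕ Fin n) :=
  sMat (Sum.inl i : Fin n ⊕ Fin n) * sMat (Sum.inl j : Fin n ⊕ Fin n)

/-- B-generator `S_{n+i} · S_{n+j}` (phase gates on copy 2). -/
def bS₂ {n : ℕ} (i j : Fin n) : QOp (Fin n ⊕ Fin n) :=
  sMat (Sum.inr i : Fin n ⊕ Fin n) * sMat (Sum.inr j : Fin n ⊕ Fin n)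

/-- H-generator `C₁ = ∏_{i=1}^n CNOT_{i → n+i}` (controls on copy 1, targets on copy 2). -/
def hC₁ (n : ℕ) : QOp (Fin n ⊕ Fin n) := fun f g =>
  if f = Sum.elim (fun i => g (Sum.inl i)) (fun i => g (Sum.inr i) + g (Sum.inl i))
  then 1 else 0

/-- H-generator `C₂ = ∏_{i=1}^n CNOT_{n+i → i}` (controls on copy 2, targets on copy 1). -/
def hC₂ (n : ℕ) : QOp (Fin n ⊕ Fin n) := fun f g =>
  if f = Sum.elim (fun i => g (Sum.inl i) + g (Sum.inr i)) (fun i => g (Sum.inr i))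
  then 1 else 0


/-- Kronecker product of two single-qubit operators, as a two-qubit operator. -/
def kron2 (A B : Matrix (Fin 2) (Fin 2) ℂ) :
    Matrix (Fin 2 × Fin 2) (Fin 2 × Fin 2) ℂ :=
  fun p q => A p.1 q.1 * B p.2 q.2

/-- The two-qubit Pauli group: matrices `λ(P⊗Q)` with `λ ∈ {1,-1,i,-i}`. -/
def Pauli2Set : Set (Matrix (Fin 2 × Fin 2) (Fin 2 × Fin 2) ℂ) :=
  {M | ∃ lam : ℂ, lam ∈ ({1, -1, Complex.I, -Complex.I} : Set ℂ) ∧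
    ∃ P ∈ pauliSet, ∃ Q ∈ pauliSet, M = lam • kron2 P Q}

/-- Membership in the two-qubit Clifford group `𝒞₂`. -/
def IsClifford2 (A : Matrix (Fin 2 × Fin 2) (Fin 2 × Fin 2) ℂ) : Prop :=
  A ∈ Matrix.unitaryGroup (Fin 2 × Fin 2) ℂ ∧
    (fun M => A * M * A⁻¹) '' Pauli2Set = Pauli2Set

/-- The two-qubit controlled-Z gate `diag(1,1,1,-1)`. -/
def cz2 : Matrix (Fin 2 × Fin 2) (Fin 2 × Fin 2) ℂ :=
  Matrix.diagonal fun p => if p.1 = 1 ∧ p.2 = 1 then (-1 : ℂ) else 1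

/-- A two-qubit operator embedded at the (distinct) qubits `p, q` of the register
indexed by `ι` (identity elsewhere). -/
def embed2 {ι : Type} [Fintype ι] [DecidableEq ι] (p q : ι)
    (A : Matrix (Fin 2 × Fin 2) (Fin 2 × Fin 2) ℂ) : QOp ι := fun f g =>
  A (f p, f q) (g p, g q) *
    ∏ i ∈ (Finset.univ.erase p).erase q, (if f i = g i then (1 : ℂ) else 0)



open Complex Matrix Function
open scoped Kronecker

lemma pauli_apply_eq_zero_or_pow_four {P : Matrix (Fin 2) (Fin 2) ℂ} (hP : P ∈ pauliSet)
    (u v : Fin 2) : P u v = 0 ∨ P u v ^ 4 = 1 := by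
  rcases hP with rfl | rfl | rfl | rfl <;> fin_cases u <;> fin_cases v <;>
    simp [pI, pX, pY, pZ, pow_succ]

lemma pauli_apply_add_one {P : Matrix (Fin 2) (Fin 2) ℂ} (hP : P ∈ pauliSet) (u v : Fin 2) :
    ∃ φ : ℂ, φ ^ 2 = 1 ∧ P (u + 1) (v + 1) = φ * P u v := by
  have h : P (u + 1) (v + 1) = P u v ∨ P (u + 1) (v + 1) = -P u v := by
    rcases hP with rfl | rfl | rfl | rfl <;> fin_cases u <;> fin_cases v <;> simp [pI, pX, pY, pZ]
  rcases h with h | h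
  exacts [⟨1, by norm_num, by simp [h]⟩, ⟨-1, by norm_num, by simp [h]⟩]

lemma pauli_exists_shift {P : Matrix (Fin 2) (Fin 2) ℂ} (hP : P ∈ pauliSet) :
    ∃ t : Fin 2, ∀ u v, u ≠ v + t → P u v = 0 := by
  rcases hP with rfl | rfl | rfl | rfl
  · exact ⟨0, by intro u v; fin_cases u <;> fin_cases v <;> simp [pI]⟩
  · exact ⟨1, by intro u v; fin_cases u <;> fin_cases v <;> simp [pX]⟩
  · exact ⟨1, by intro u v; fin_cases u <;> fin_cases v <;> simp [pY]⟩
  · exact ⟨0, by intro u v; fin_cases u <;> fin_cases v <;> simp [pZ]⟩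

lemma kron2_eq_kronecker (A B : Matrix (Fin 2) (Fin 2) ℂ) : kron2 A B = A ⊗ₖ B := rfl

lemma kron2_mem_pauli2Set {P Q : Matrix (Fin 2) (Fin 2) ℂ} (hP : P ∈ pauliSet)
    (hQ : Q ∈ pauliSet) : kron2 P Q ∈ Pauli2Set :=
  ⟨1, by simp, P, hP, Q, hQ, by simp⟩

lemma pauli2_apply_eq_zero_or_pow_four {M : Matrix (Fin 2 × Fin 2) (Fin 2 × Fin 2) ℂ}
    (hM : M ∈ Pauli2Set) (p q : Fin 2 × Fin 2) : M p q = 0 ∨ M p q ^ 4 = 1 := by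
  obtain ⟨lam, hlam, P, hP, Q, hQ, rfl⟩ := hM
  have hlam4 : lam ^ 4 = 1 := by
    rcases hlam with rfl | rfl | rfl | rfl <;> simp [pow_succ]
  rcases pauli_apply_eq_zero_or_pow_four hP p.1 q.1 with h₁ | h₁ <;>
  rcases pauli_apply_eq_zero_or_pow_four hQ p.2 q.2 with h₂ | h₂ <;>
    simp [kron2, mul_pow, h₁, h₂, hlam4]

lemma pauli2_apply_add_snd {M : Matrix (Fin 2 × Fin 2) (Fin 2 × Fin 2) ℂ}
    (hM : M ∈ Pauli2Set) (p q : Fin 2 × Fin 2) :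
    ∃ φ : ℂ, φ ^ 2 = 1 ∧ M (p + (0, 1)) (q + (0, 1)) = φ * M p q := by
  obtain ⟨lam, -, P, -, Q, hQ, rfl⟩ := hM
  obtain ⟨φ, hφ, h⟩ := pauli_apply_add_one hQ p.2 q.2
  refine ⟨φ, hφ, ?_⟩
  simp only [Matrix.smul_apply, kron2, Prod.fst_add, Prod.snd_add, add_zero, h, smul_eq_mul]
  ring

lemma exists_sq_eq_one_prod_eq {ι M : Type*} [CommMonoid M] (s : Finset ι) {f g : ι → M}
    (h : ∀ i, ∃ φ : M, φ ^ 2 = 1 ∧ f i = φ * g i) :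
    ∃ φ : M, φ ^ 2 = 1 ∧ ∏ i ∈ s, f i = φ * ∏ i ∈ s, g i := by
  choose φ hφ hfg using h
  exact ⟨∏ i ∈ s, φ i, by simp [← Finset.prod_pow, hφ], by simp [hfg, Finset.prod_mul_distrib]⟩

lemma embed2_mulVec_apply {ι : Type} [Fintype ι] [DecidableEq ι] {p q : ι} (hpq : p ≠ q)
    (A : Matrix (Fin 2 × Fin 2) (Fin 2 × Fin 2) ℂ) (ψ : QState ι) (f : ι → Fin 2) :
    (embed2 p q A *ᵥ ψ) f =
      ∑ w : Fin 2 × Fin 2, A (f p, f q) w * ψ (update (update f p w.1) q w.2) := by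
  symm
  refine Finset.sum_of_injOn (fun w => update (update f p w.1) q w.2) ?_ (by simp) ?_ ?_
  · intro w _ w' _ h
    have hp := congrFun h p
    have hq := congrFun h q
    simp only [update_of_ne hpq, update_self] at hp hq
    exact Prod.ext hp hq
  · intro g _ hg
    have : ∃ i ∈ (Finset.univ.erase p).erase q, f i ≠ g i := by
      by_contra! h
      refine hg ⟨(g p, g q), by simp, ?_⟩
      funext i
      by_cases hiq : i = q
      · subst hiq; simp
      by_cases hip : i = p
      · subst hip; simp [hiq]
      · simp [update_of_ne hiq, update_of_ne hip, h i (by simp [hiq, hip])]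
    obtain ⟨i, hi, hfg⟩ := this
    simp only [embed2]
    rw [Finset.prod_eq_zero hi (if_neg hfg), mul_zero, zero_mul]
  · intro w _
    have hq : ∀ i ∈ (Finset.univ.erase p).erase q,
        (if f i = update (update f p w.1) q w.2 i then (1 : ℂ) else 0) = 1 := by
      intro i hi
      rw [Finset.mem_erase, Finset.mem_erase] at hi
      simp [update_of_ne hi.1, update_of_ne hi.2.1]
    simp [embed2, update_of_ne hpq, Finset.prod_congr rfl hq]

section GHZ

variable {n : ℕ}

def nodeConfig (a b x : Fin 2) : Fin n → Fin 2 :=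
  fun i => if i.val = 0 then a else if i.val = 1 then b else x

lemma nodeConfig_zero (h : 0 < n) (a b x : Fin 2) : nodeConfig a b x ⟨0, h⟩ = a := rfl

lemma nodeConfig_one (h : 1 < n) (a b x : Fin 2) : nodeConfig a b x ⟨1, h⟩ = b := rfl

lemma update_nodeConfig_zero (h : 0 < n) (a b x a' : Fin 2) :
    update (nodeConfig a b x) ⟨0, h⟩ a' = nodeConfig a' b x := by
  funext i
  by_cases hi : i.val = 0
  · simp [show i = ⟨0, h⟩ from Fin.ext hi, nodeConfig]
  · simp [update_of_ne (show i ≠ ⟨0, h⟩ from fun h => hi (by simp [h])), nodeConfig, hi]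

lemma update_nodeConfig_one (h : 1 < n) (a b x b' : Fin 2) :
    update (nodeConfig a b x) ⟨1, h⟩ b' = nodeConfig a b' x := by
  funext i
  by_cases hi : i.val = 1
  · simp [show i = ⟨1, h⟩ from Fin.ext hi, nodeConfig]
  · simp [update_of_ne (show i ≠ ⟨1, h⟩ from fun h => hi (by simp [h])), nodeConfig, hi]

lemma nodeConfig_add_one (a b x : Fin 2) :
    (fun i => nodeConfig (n := n) a b x i + 1) = nodeConfig (a + 1) (b + 1) (x + 1) := by
  funext i
  unfold nodeConfig
  split_ifs <;> rfl

lemma nodeConfig_eq_const (hn : 3 ≤ n) (a b x c : Fin 2) :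
    nodeConfig (n := n) a b x = (fun _ => c) ↔ a = c ∧ b = c ∧ x = c := by
  refine ⟨fun h => ⟨congrFun h ⟨0, by omega⟩, congrFun h ⟨1, by omega⟩, congrFun h ⟨2, by omega⟩⟩,
    ?_⟩
  rintro ⟨rfl, rfl, rfl⟩
  funext i
  unfold nodeConfig
  split_ifs <;> rfl

lemma ghz_nodeConfig (hn : 3 ≤ n) (a b x : Fin 2) :
    ghz n (nodeConfig a b x) = if a = x ∧ b = x then (√2 : ℂ)⁻¹ else 0 := by
  simp only [ghz, nodeConfig_eq_const hn]
  fin_cases a <;> fin_cases b <;> fin_cases x <;> simp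

lemma kron_mulVec_ghz_apply (P : Fin n → Matrix (Fin 2) (Fin 2) ℂ) (f : Fin n → Fin 2) :
    (kron P *ᵥ ghz n) f = (√2 : ℂ)⁻¹ * ∑ z : Fin 2, ∏ i, P i (f i) z := by
  simp only [mulVec, dotProduct, kron, ghz, mul_add, mul_ite, mul_one, mul_zero,
    Finset.sum_add_distrib, Finset.sum_ite_eq', Finset.mem_univ, if_true, Fin.sum_univ_two]
  ring

lemma ghz_isGHZBasis : IsGHZBasis (ghz n) := by
  refine ⟨1, ⟨fun _ => pI, fun _ => by simp [pauliSet], ?_⟩, (one_mulVec _).symm⟩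
  ext f g
  simp [kron, pI, one_apply, Fintype.prod_boole, funext_iff]

theorem IsGHZBasis.apply_nodeConfig (hn : 3 ≤ n) {v : QState (Fin n)} (hv : IsGHZBasis v) :
    ∃ s₁ s₂ : Fin 2, ∃ Φ : Fin 2 → ℂ, (∃ φ : ℂ, φ ^ 2 = 1 ∧ Φ 1 = φ * Φ 0) ∧
      ∀ a b x, v (nodeConfig a b x) = if a = x + s₁ ∧ b = x + s₂ then Φ x else 0 := by
  obtain ⟨_, ⟨P, hP, rfl⟩, rfl⟩ := hv
  choose t ht using fun i => pauli_exists_shift (hP i)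
  let i₀ : Fin n := ⟨0, by omega⟩
  let i₁ : Fin n := ⟨1, by omega⟩
  let i₂ : Fin n := ⟨2, by omega⟩
  set τ := t i₂
  let F (a b x : Fin 2) : ℂ := ∏ i, P i (nodeConfig a b x i) (x + τ)
  -- Qubit 2 (present as `n ≥ 3`) pins the branch `z` of the GHZ superposition to `x + τ`.
  have hF a b x : (kron P *ᵥ ghz n) (nodeConfig a b x) = (√2 : ℂ)⁻¹ * F a b x := by
    rw [kron_mulVec_ghz_apply, Fintype.sum_eq_single (x + τ)]
    intro z hz
    refine Finset.prod_eq_zero (Finset.mem_univ i₂) (ht _ _ _ ?_)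
    show x ≠ z + τ
    omega
  have hF_add_one a b x : ∃ φ : ℂ, φ ^ 2 = 1 ∧ F (a + 1) (b + 1) (x + 1) = φ * F a b x := by
    simp only [F, ← nodeConfig_add_one, add_right_comm x 1 τ]
    exact exists_sq_eq_one_prod_eq _ fun i => pauli_apply_add_one (hP i) _ _
  refine ⟨τ + t i₀, τ + t i₁, fun x => (√2 : ℂ)⁻¹ * F (x + (τ + t i₀)) (x + (τ + t i₁)) x, ?_, ?_⟩
  · obtain ⟨φ, hφ, h⟩ := hF_add_one (τ + t i₀) (τ + t i₁) 0
    refine ⟨φ, hφ, ?_⟩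
    simp only [zero_add, add_comm (1 : Fin 2)] at h ⊢
    rw [h]
    ring
  · intro a b x
    rw [hF]
    split_ifs with h
    · rw [h.1, h.2]
    · rw [not_and_or] at h
      rcases h with h | h
      · refine mul_eq_zero_of_right _ (Finset.prod_eq_zero (Finset.mem_univ i₀) (ht _ _ _ ?_))
        rwa [add_assoc]
      · refine mul_eq_zero_of_right _ (Finset.prod_eq_zero (Finset.mem_univ i₁) (ht _ _ _ ?_))
        rwa [add_assoc]

lemma bilocal_mulVec_ghz_apply (hn : 3 ≤ n) {h₀ : 0 < n} {h₁ : 1 < n}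
    (g₁ g₂ : Matrix (Fin 2 × Fin 2) (Fin 2 × Fin 2) ℂ) (a b c d x y : Fin 2) :
    ((embed2 (Sum.inl ⟨0, h₀⟩ : Fin n ⊕ Fin n) (Sum.inr ⟨0, h₀⟩) g₁ *
        embed2 (Sum.inl ⟨1, h₁⟩ : Fin n ⊕ Fin n) (Sum.inr ⟨1, h₁⟩) g₂) *ᵥ
          tensor2 (ghz n) (ghz n)) (Sum.elim (nodeConfig a b x) (nodeConfig c d y)) =
      2⁻¹ * (g₁ (a, c) (x, y) * g₂ (b, d) (x, y)) := by
  simp only [← mulVec_mulVec, embed2_mulVec_apply Sum.inl_ne_inr, Sum.update_elim_inl,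
    Sum.update_elim_inr, update_nodeConfig_zero, update_nodeConfig_one, Sum.elim_inl, Sum.elim_inr,
    nodeConfig_zero, nodeConfig_one, tensor2, ghz_nodeConfig hn]
  have hsqrt : (√2 : ℂ)⁻¹ * (√2 : ℂ)⁻¹ = 2⁻¹ := by
    rw [← mul_inv, ← ofReal_mul, Real.mul_self_sqrt zero_le_two, ofReal_ofNat]
  have hδ (w w' : Fin 2 × Fin 2) :
      ((if w.1 = x ∧ w'.1 = x then (√2 : ℂ)⁻¹ else 0) *
          if w.2 = y ∧ w'.2 = y then (√2 : ℂ)⁻¹ else 0) =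
        if w = (x, y) then if w' = (x, y) then 2⁻¹ else 0 else 0 := by
    simp only [Prod.ext_iff]
    split_ifs <;> simp_all
  simp only [hδ, mul_ite, mul_zero, Finset.sum_ite_irrel, Finset.sum_ite_eq', Finset.mem_univ,
    if_true, Finset.sum_const_zero]
  ring

end GHZ

lemma exists_apply_ne_zero_of_mem_unitaryGroup {ι : Type*} [Fintype ι] [DecidableEq ι]
    {U : Matrix ι ι ℂ} (hU : U ∈ unitaryGroup ι ℂ) (q : ι) : ∃ p, U p q ≠ 0 := by
  by_contra! h
  have := congrFun (congrFun (mem_unitaryGroup_iff'.mp hU) q) q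
  simp [Matrix.mul_apply, h] at this

def IsShiftDiagonal {ι : Type*} [DecidableEq ι] [Add ι] (g : Matrix ι ι ℂ) (t : ι) (A : ι → ℂ) :
    Prop :=
  ∀ p q, g p q = if p = q + t then A q else 0

namespace IsShiftDiagonal

variable {ι : Type*} [Fintype ι] [DecidableEq ι] [AddGroup ι] {g : Matrix ι ι ℂ} {t : ι}
  {A : ι → ℂ}

lemma conj_apply (hg : IsShiftDiagonal g t A) (K : Matrix ι ι ℂ) (p p' : ι) :
    (g * K * star g) (p + t) (p' + t) = A p * K p p' * star (A p') := by
  simp [Matrix.mul_apply, hg _ _, Matrix.star_apply, ite_mul, apply_ite (starRingEnd ℂ), mul_ite]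

lemma star_mul_self (hg : IsShiftDiagonal g t A) (hu : g ∈ unitaryGroup ι ℂ) (q : ι) :
    star (A q) * A q = 1 := by
  have h := congrFun (congrFun (mem_unitaryGroup_iff'.mp hu) q) q
  simpa [Matrix.mul_apply, hg _ _, Matrix.star_apply] using h

lemma norm_eq_one (hg : IsShiftDiagonal g t A) (hu : g ∈ unitaryGroup ι ℂ) (q : ι) :
    ‖A q‖ = 1 := by
  have h : ‖A q‖ * ‖A q‖ = 1 := by simpa using congrArg norm (hg.star_mul_self hu q)
  exact (mul_self_eq_one_iff.mp h).resolve_right (by linarith [norm_nonneg (A q)])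

end IsShiftDiagonal

lemma isShiftDiagonal_of_mul_apply {ι : Type*} [Fintype ι] [DecidableEq ι] [Add ι]
    {G H : Matrix ι ι ℂ} (hH : H ∈ unitaryGroup ι ℂ) {t₁ t₂ : ι} {c : ι → ℂ}
    (h : ∀ p p' q, G p q * H p' q = if p = q + t₁ ∧ p' = q + t₂ then c q else 0) :
    IsShiftDiagonal G t₁ fun q => G (q + t₁) q := by
  intro p q
  split_ifs with hp
  · rw [hp]
  · obtain ⟨p', hp'⟩ := exists_apply_ne_zero_of_mem_unitaryGroup hH q
    have := h p p' q
    rw [if_neg fun h => hp h.1] at this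
    exact (mul_eq_zero.mp this).resolve_right hp'

lemma pX_pow_apply (s u v : Fin 2) : (pX ^ (s : ℕ)) u v = if u = v + s then 1 else 0 := by
  fin_cases s <;> fin_cases u <;> fin_cases v <;> simp [pX, one_apply]

lemma IsShiftDiagonal.eq_kron2_mul_diagonal {g : Matrix (Fin 2 × Fin 2) (Fin 2 × Fin 2) ℂ}
    {t : Fin 2 × Fin 2} {A : Fin 2 × Fin 2 → ℂ} (hg : IsShiftDiagonal g t A) :
    g = kron2 (pX ^ (t.1 : ℕ)) (pX ^ (t.2 : ℕ)) * diagonal A := by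
  ext p q
  simp only [hg p q, kron2, pX_pow_apply, mul_diagonal, Prod.ext_iff]
  split_ifs <;> simp_all

lemma exists_pX_pow_mul_diagonal_eq_smul (s : Fin 2) {ζ : ℂ} (hζ : ζ ^ 2 = 1) :
    ∃ P ∈ pauliSet, ∃ ω : ℂ, ‖ω‖ = 1 ∧
      pX ^ (s : ℕ) * diagonal (fun v : Fin 2 => ζ ^ (v : ℕ)) = ω • P := by
  rcases sq_eq_one_iff.mp hζ with rfl | rfl <;> fin_cases s
  · refine ⟨pI, by simp [pauliSet], 1, by simp, ?_⟩
    ext u v; fin_cases u <;> fin_cases v <;> simp [pI]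
  · refine ⟨pX, by simp [pauliSet], 1, by simp, ?_⟩
    ext u v; fin_cases u <;> fin_cases v <;> simp [pX]
  · refine ⟨pZ, by simp [pauliSet], 1, by simp, ?_⟩
    ext u v; fin_cases u <;> fin_cases v <;> simp [pZ]
  · refine ⟨pY, by simp [pauliSet], -I, by simp, ?_⟩
    ext u v; fin_cases u <;> fin_cases v <;> simp [pX, pY]

def quadPhase (ρ σ ε : ℂ) (q : Fin 2 × Fin 2) : ℂ :=
  ρ ^ (q.1 : ℕ) * σ ^ (q.2 : ℕ) * ε ^ ((q.1 : ℕ) * q.2)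

lemma quadPhase_mul (ρ σ ε ρ' σ' ε' : ℂ) :
    quadPhase ρ σ ε * quadPhase ρ' σ' ε' = quadPhase (ρ * ρ') (σ * σ') (ε * ε') := by
  funext q
  simp only [Pi.mul_apply, quadPhase, mul_pow]
  ring

lemma apply_fst_mul_apply_snd_eq {Φ Ψ : Fin 2 → ℂ} {φ ψ : ℂ} (hΦ : Φ 1 = φ * Φ 0)
    (hΨ : Ψ 1 = ψ * Ψ 0) (q : Fin 2 × Fin 2) :
    Φ q.1 * Ψ q.2 = Φ 0 * Ψ 0 * quadPhase φ ψ 1 q := by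
  rcases q with ⟨x, y⟩
  fin_cases x <;> fin_cases y <;>
    simp only [Fin.zero_eta, Fin.mk_one, hΦ, hΨ, quadPhase, pow_zero, pow_one, one_pow, one_mul,
      mul_one] <;> ring

lemma mul_eq_of_smul_quadPhase_mul_eq {α β κ ρ₁ σ₁ ε₁ ρ₂ σ₂ ε₂ φ ψ : ℂ} (hα : α ≠ 0) (hβ : β ≠ 0)
    (hφ : φ ^ 2 = 1) (hψ : ψ ^ 2 = 1)
    (h : (α • quadPhase ρ₁ σ₁ ε₁) * (β • quadPhase ρ₂ σ₂ ε₂) = κ • quadPhase φ ψ 1) :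
    ρ₁ * ρ₂ = φ ∧ σ₁ * σ₂ = ψ ∧ ε₁ * ε₂ = 1 := by
  have hq q := congrFun h q
  have h00 := hq (0, 0)
  have h10 := hq (1, 0)
  have h01 := hq (0, 1)
  have h11 := hq (1, 1)
  simp only [Pi.mul_apply, Pi.smul_apply, quadPhase, Fin.coe_ofNat_eq_mod, Nat.zero_mod,
    Nat.mod_succ, pow_zero, pow_one, mul_one, mul_zero, one_mul, smul_eq_mul] at h00 h10 h01 h11
  have hαβ : α * β ≠ 0 := mul_ne_zero hα hβ
  have hρ : ρ₁ * ρ₂ = φ := mul_left_cancel₀ hαβ (by linear_combination h10 - φ * h00)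
  have hσ : σ₁ * σ₂ = ψ := mul_left_cancel₀ hαβ (by linear_combination h01 - ψ * h00)
  have hφψ : φ * ψ ≠ 0 :=
    mul_ne_zero (by rintro rfl; norm_num at hφ) (by rintro rfl; norm_num at hψ)
  refine ⟨hρ, hσ, mul_left_cancel₀ (mul_ne_zero hαβ hφψ) ?_⟩
  linear_combination h11 - φ * ψ * h00 - α * β * ε₁ * ε₂ * φ * hσ - α * β * ε₁ * ε₂ * σ₁ * σ₂ * hρ

lemma exists_sign_mul_I_pow_pair {ρ₁ ρ₂ : ℂ} (h₁ : ρ₁ ^ 4 = 1) (h₁₂ : (ρ₁ * ρ₂) ^ 2 = 1) :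
    ∃ b : Fin 2, ∃ ζ₁ ζ₂ : ℂ, ζ₁ ^ 2 = 1 ∧ ζ₂ ^ 2 = 1 ∧
      ρ₁ = ζ₁ * I ^ (b : ℕ) ∧ ρ₂ = ζ₂ * I ^ (b : ℕ) := by
  rcases sq_eq_one_iff.mp (show (ρ₁ ^ 2) ^ 2 = 1 by rw [← pow_mul]; exact h₁) with h | h
  · exact ⟨0, ρ₁, ρ₂, h, by linear_combination h₁₂ - ρ₂ ^ 2 * h, by simp, by simp⟩
  · refine ⟨1, -I * ρ₁, -I * ρ₂, ?_, ?_, ?_, ?_⟩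
    · linear_combination (-1 : ℂ) * h + ρ₁ ^ 2 * I_sq
    · linear_combination h₁₂ - ρ₂ ^ 2 * h + ρ₂ ^ 2 * I_sq
    · simp only [Fin.val_one, pow_one]; linear_combination ρ₁ * I_sq
    · simp only [Fin.val_one, pow_one]; linear_combination ρ₂ * I_sq

lemma diagonal_quadPhase_one (ζ η : ℂ) :
    diagonal (quadPhase ζ η 1) =
      kron2 (diagonal fun v => ζ ^ (v : ℕ)) (diagonal fun v => η ^ (v : ℕ)) := by
  rw [kron2_eq_kronecker, diagonal_kronecker_diagonal]
  simp [quadPhase]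

lemma diagonal_quadPhase_I_pow (a b c : Fin 2) :
    diagonal (quadPhase (I ^ (b : ℕ)) (I ^ (c : ℕ)) ((-1) ^ (a : ℕ))) =
      cz2 ^ (a : ℕ) * kron2 (sGate ^ (b : ℕ)) (sGate ^ (c : ℕ)) := by
  have hS : sGate = diagonal ![1, I] := by ext i j; fin_cases i <;> fin_cases j <;> simp [sGate]
  rw [cz2, hS, diagonal_pow, diagonal_pow, diagonal_pow, kron2_eq_kronecker,
    diagonal_kronecker_diagonal, diagonal_mul_diagonal]
  congr 1
  funext q
  rcases q with ⟨x, y⟩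
  fin_cases a <;> fin_cases b <;> fin_cases c <;> fin_cases x <;> fin_cases y <;> simp [quadPhase]

lemma IsClifford2.conj_mem {g : Matrix (Fin 2 × Fin 2) (Fin 2 × Fin 2) ℂ} (hg : IsClifford2 g)
    {K : Matrix (Fin 2 × Fin 2) (Fin 2 × Fin 2) ℂ} (hK : K ∈ Pauli2Set) :
    g * K * star g ∈ Pauli2Set := by
  rw [← hg.2, ← Matrix.inv_eq_left_inv (mem_unitaryGroup_iff'.mp hg.1)]
  exact ⟨K, hK, rfl⟩

theorem IsClifford2.eq_smul_quadPhase {g : Matrix (Fin 2 × Fin 2) (Fin 2 × Fin 2) ℂ}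
    (hg : IsClifford2 g) {t : Fin 2 × Fin 2} {A : Fin 2 × Fin 2 → ℂ}
    (hgA : IsShiftDiagonal g t A) :
    ∃ ρ σ ε : ℂ, ρ ^ 4 = 1 ∧ σ ^ 4 = 1 ∧ ε ^ 2 = 1 ∧ A = A (0, 0) • quadPhase ρ σ ε := by
  have hA := hgA.star_mul_self hg.1
  have hA_ne q : A q ≠ 0 := fun h => by simpa [h] using hA q
  have hne q q' : A q * star (A q') ≠ 0 := mul_ne_zero (hA_ne q) (star_ne_zero.mpr (hA_ne q'))
  have hXI := hg.conj_mem (kron2_mem_pauli2Set (P := pX) (Q := pI) (by simp [pauliSet])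
    (by simp [pauliSet]))
  have hIX := hg.conj_mem (kron2_mem_pauli2Set (P := pI) (Q := pX) (by simp [pauliSet])
    (by simp [pauliSet]))
  have hρ : (g * kron2 pX pI * star g) ((1, 0) + t) ((0, 0) + t) = A (1, 0) * star (A (0, 0)) := by
    simp [hgA.conj_apply, kron2, pX, pI]
  have hρ' : (g * kron2 pX pI * star g) ((1, 0) + (0, 1) + t) ((0, 0) + (0, 1) + t) =
      A (1, 1) * star (A (0, 1)) := by
    simp [hgA.conj_apply, kron2, pX, pI]
  have hσ : (g * kron2 pI pX * star g) ((0, 1) + t) ((0, 0) + t) = A (0, 1) * star (A (0, 0)) := by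
    simp [hgA.conj_apply, kron2, pX, pI]
  obtain ⟨ε, hε, hρε⟩ := pauli2_apply_add_snd hXI ((1, 0) + t) ((0, 0) + t)
  rw [add_right_comm, add_right_comm (0, 0), hρ, hρ'] at hρε
  set ρ := A (1, 0) * star (A (0, 0)) with hρdef
  set σ := A (0, 1) * star (A (0, 0)) with hσdef
  refine ⟨ρ, σ, ε, ?_, ?_, hε, ?_⟩
  · have := pauli2_apply_eq_zero_or_pow_four hXI ((1, 0) + t) ((0, 0) + t)
    rwa [hρ, or_iff_right (hne _ _)] at this
  · have := pauli2_apply_eq_zero_or_pow_four hIX ((0, 1) + t) ((0, 0) + t)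
    rwa [hσ, or_iff_right (hne _ _)] at this
  funext q
  fin_cases q <;>
    simp only [Fin.zero_eta, Fin.mk_one, Pi.smul_apply, quadPhase, Fin.coe_ofNat_eq_mod,
      Nat.zero_mod, Nat.mod_succ, pow_zero, pow_one, one_mul, mul_one, mul_zero, smul_eq_mul]
  · linear_combination -A (0, 1) * hA (0, 0) - A (0, 0) * hσdef
  · linear_combination -A (1, 0) * hA (0, 0) - A (0, 0) * hρdef
  · linear_combination -A (1, 1) * hA (0, 1) + A (0, 1) * hρε +
      ε * ρ * (-A (0, 1) * hA (0, 0) - A (0, 0) * hσdef)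

theorem IsShiftDiagonal.exists_eq_smul_kron2_mul {g : Matrix (Fin 2 × Fin 2) (Fin 2 × Fin 2) ℂ}
    {t : Fin 2 × Fin 2} {A : Fin 2 × Fin 2 → ℂ} (hg : IsShiftDiagonal g t A) {α ζ η : ℂ}
    (hα : ‖α‖ = 1) (hζ : ζ ^ 2 = 1) (hη : η ^ 2 = 1) {a b c : Fin 2}
    (hA : A = α • quadPhase (ζ * I ^ (b : ℕ)) (η * I ^ (c : ℕ)) ((-1) ^ (a : ℕ))) :
    ∃ P ∈ pauliSet, ∃ P' ∈ pauliSet, ∃ lam : ℂ, ‖lam‖ = 1 ∧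
      g = lam • (kron2 P P' * (cz2 ^ (a : ℕ) * kron2 (sGate ^ (b : ℕ)) (sGate ^ (c : ℕ)))) := by
  obtain ⟨P, hP, ω, hω, hXζ⟩ := exists_pX_pow_mul_diagonal_eq_smul t.1 hζ
  obtain ⟨P', hP', ω', hω', hXη⟩ := exists_pX_pow_mul_diagonal_eq_smul t.2 hη
  refine ⟨P, hP, P', hP', α * (ω * ω'), by simp [hα, hω, hω'], ?_⟩
  have hdiag : diagonal A =
      α • (kron2 (diagonal fun v => ζ ^ (v : ℕ)) (diagonal fun v => η ^ (v : ℕ)) *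
        (cz2 ^ (a : ℕ) * kron2 (sGate ^ (b : ℕ)) (sGate ^ (c : ℕ)))) := by
    rw [hA, ← diagonal_quadPhase_one, ← diagonal_quadPhase_I_pow, diagonal_mul_diagonal,
      ← diagonal_smul, ← Pi.mul_def, quadPhase_mul, one_mul]
  rw [hg.eq_kron2_mul_diagonal, hdiag, mul_smul_comm, ← mul_assoc, kron2_eq_kronecker,
    kron2_eq_kronecker, ← mul_kronecker_mul, hXζ, hXη, smul_kronecker, kronecker_smul, smul_smul,
    ← kron2_eq_kronecker, smul_mul_assoc, smul_smul]

theorem GHZPreserving2.exists_isShiftDiagonal {n : ℕ} (hn : 3 ≤ n) {h₀ : 0 < n} {h₁ : 1 < n}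
    {g₁ g₂ : Matrix (Fin 2 × Fin 2) (Fin 2 × Fin 2) ℂ}
    (hg₁ : g₁ ∈ unitaryGroup (Fin 2 × Fin 2) ℂ) (hg₂ : g₂ ∈ unitaryGroup (Fin 2 × Fin 2) ℂ)
    (hpres : GHZPreserving2 (n := n)
      (embed2 (Sum.inl ⟨0, h₀⟩ : Fin n ⊕ Fin n) (Sum.inr ⟨0, h₀⟩) g₁ *
        embed2 (Sum.inl ⟨1, h₁⟩ : Fin n ⊕ Fin n) (Sum.inr ⟨1, h₁⟩) g₂)) :
    ∃ t₁ t₂ : Fin 2 × Fin 2, ∃ A B : Fin 2 × Fin 2 → ℂ, ∃ κ φ ψ : ℂ, φ ^ 2 = 1 ∧ ψ ^ 2 = 1 ∧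
      IsShiftDiagonal g₁ t₁ A ∧ IsShiftDiagonal g₂ t₂ B ∧ A * B = κ • quadPhase φ ψ 1 := by
  obtain ⟨u, v, hu, hv, lam, -, heq⟩ := hpres _ _ ghz_isGHZBasis ghz_isGHZBasis
  obtain ⟨s₁, s₂, Φ, ⟨φ, hφ, hΦ⟩, hu⟩ := hu.apply_nodeConfig hn
  obtain ⟨r₁, r₂, Ψ, ⟨ψ, hψ, hΨ⟩, hv⟩ := hv.apply_nodeConfig hn
  have hmul : ∀ p p' q, g₁ p q * g₂ p' q =
      if p = q + (s₁, r₁) ∧ p' = q + (s₂, r₂) then 2 * lam * (Φ q.1 * Ψ q.2) else 0 := by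
    rintro ⟨a, c⟩ ⟨b, d⟩ ⟨x, y⟩
    have h := congrFun heq (Sum.elim (nodeConfig a b x) (nodeConfig c d y))
    rw [bilocal_mulVec_ghz_apply hn] at h
    simp only [Pi.smul_apply, tensor2, Sum.elim_inl, Sum.elim_inr, hu, hv, smul_eq_mul] at h
    simp only [Prod.mk_add_mk, Prod.mk.injEq]
    split_ifs at h ⊢ <;> first | linear_combination 2 * h | tauto
  have hA := isShiftDiagonal_of_mul_apply hg₂ hmul
  have hB := isShiftDiagonal_of_mul_apply (G := g₂) (t₁ := (s₂, r₂)) (t₂ := (s₁, r₁)) hg₁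
    fun p' p q => by rw [mul_comm, hmul]; exact if_congr and_comm rfl rfl
  refine ⟨_, _, _, _, 2 * lam * (Φ 0 * Ψ 0), φ, ψ, hφ, hψ, hA, hB, funext fun q => ?_⟩
  have h := hmul (q + (s₁, r₁)) (q + (s₂, r₂)) q
  rw [if_pos ⟨rfl, rfl⟩, apply_fst_mul_apply_snd_eq hΦ hΨ] at h
  simp only [Pi.mul_apply, h, Pi.smul_apply, smul_eq_mul, mul_assoc]

/-- if applying the two-qubit Clifford gates `g₁` (at node 1) and `g₂`
(at node 2) bilocally is GHZ-preserving, then up to unit phases and Pauli factors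
both gates equal the same `CZ^a (S^b ⊗ S^c)`. -/
theorem stmt5 (n : ℕ) (hn : 3 ≤ n)
    (g₁ g₂ : Matrix (Fin 2 × Fin 2) (Fin 2 × Fin 2) ℂ)
    (hg₁ : IsClifford2 g₁) (hg₂ : IsClifford2 g₂)
    (hpres : GHZPreserving2 (n := n)
      (embed2 (Sum.inl ⟨0, by omega⟩ : Fin n ⊕ Fin n) (Sum.inr ⟨0, by omega⟩) g₁ *
        embed2 (Sum.inl ⟨1, by omega⟩ : Fin n ⊕ Fin n) (Sum.inr ⟨1, by omega⟩) g₂)) :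
    ∃ a b c : Fin 2,
      ∃ P₁ ∈ pauliSet, ∃ P₁' ∈ pauliSet, ∃ P₂ ∈ pauliSet, ∃ P₂' ∈ pauliSet,
        ∃ lam₁ lam₂ : ℂ, ‖lam₁‖ = 1 ∧ ‖lam₂‖ = 1 ∧
          g₁ = lam₁ • (kron2 P₁ P₁' *
              (cz2 ^ (a : ℕ) * kron2 (sGate ^ (b : ℕ)) (sGate ^ (c : ℕ)))) ∧
          g₂ = lam₂ • (kron2 P₂ P₂' *
              (cz2 ^ (a : ℕ) * kron2 (sGate ^ (b : ℕ)) (sGate ^ (c : ℕ)))) := by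
  obtain ⟨t₁, t₂, A, B, κ, φ, ψ, hφ, hψ, hA, hB, hAB⟩ :=
    hpres.exists_isShiftDiagonal hn hg₁.1 hg₂.1
  obtain ⟨ρ₁, σ₁, ε₁, hρ₁, hσ₁, hε₁, hA'⟩ := hg₁.eq_smul_quadPhase hA
  obtain ⟨ρ₂, σ₂, ε₂, -, -, -, hB'⟩ := hg₂.eq_smul_quadPhase hB
  have hα := hA.norm_eq_one hg₁.1 (0, 0)
  have hβ := hB.norm_eq_one hg₂.1 (0, 0)
  rw [hA', hB'] at hAB
  obtain ⟨hρ, hσ, hε⟩ := mul_eq_of_smul_quadPhase_mul_eq (norm_ne_zero_iff.mp (hα ▸ one_ne_zero))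
    (norm_ne_zero_iff.mp (hβ ▸ one_ne_zero)) hφ hψ hAB
  obtain ⟨b, ζ₁, ζ₂, hζ₁, hζ₂, rfl, rfl⟩ := exists_sign_mul_I_pow_pair hρ₁ (hρ ▸ hφ)
  obtain ⟨c, η₁, η₂, hη₁, hη₂, rfl, rfl⟩ := exists_sign_mul_I_pow_pair hσ₁ (hσ ▸ hψ)
  obtain ⟨a, rfl⟩ : ∃ a : Fin 2, (-1) ^ (a : ℕ) = ε₁ := by
    rcases sq_eq_one_iff.mp hε₁ with rfl | rfl
    exacts [⟨0, by simp⟩, ⟨1, by simp⟩]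
  obtain rfl : ε₂ = (-1) ^ (a : ℕ) := by linear_combination (-1) ^ (a : ℕ) * hε - ε₂ * hε₁
  obtain ⟨P₁, hP₁, P₁', hP₁', lam₁, hlam₁, rfl⟩ := hA.exists_eq_smul_kron2_mul hα hζ₁ hη₁ hA'
  obtain ⟨P₂, hP₂, P₂', hP₂', lam₂, hlam₂, rfl⟩ := hB.exists_eq_smul_kron2_mul hβ hζ₂ hη₂ hB'
  exact ⟨a, b, c, P₁, hP₁, P₁', hP₁', P₂, hP₂, P₂', hP₂', lam₁, lam₂, hlam₁, hlam₂, rfl, rfl⟩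
end
end

section
/- Let n ≥ 2. Each of the two H-generators C₁ = ∏_{i=1}^n CNOT_{i→n+i} and C₂ = ∏_{i=1}^n CNOT_{n+i→i} (the same CNOT applied homogeneously at every node of the two-copy system) is GHZ-preserving: for all GHZ-basis states u, v there exist GHZ-basis states u′, v′ and a unit complex scalar λ such that applying the generator to u⊗v yields λ(u′⊗v′). -/
noncomputable section

/-!
Every Pauli matrix is a signed shift `|x⟩ ↦ φ εˣ |s + x⟩` with `|φ| = 1` and `ε = ±1`, and every
signed shift with `ε = ±1` is a Pauli matrix up to its phase `φ`. Hence the GHZ-basis states are, up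
to a phase, exactly the states `(|a⟩ + ε|a + 1⟩)/√2` with `a ∈ 𝔽₂ⁿ` and `ε = ±1`. The homogeneous
CNOT `C₁` permutes computational basis states, `|x, y⟩ ↦ |x, x + y⟩`, so expanding the four terms
and using `η² = 1` gives
`C₁ ((|a⟩ + ε|a + 1⟩) ⊗ (|b⟩ + η|b + 1⟩)) = (|a⟩ + εη|a + 1⟩) ⊗ (|a + b⟩ + η|a + b + 1⟩)`,
and symmetrically for `C₂`.
-/

open Matrix

lemma one_add_one_eq_zero_of_fin_two {ι : Type} : (1 : ι → Fin 2) + 1 = 0 :=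
  funext fun _ => rfl

section SignedShift

variable {ι : Type} [Fintype ι] [DecidableEq ι]

def ghzState (a : ι → Fin 2) (ε : ℂ) : QState ι :=
  (Real.sqrt 2 : ℂ)⁻¹ • (Pi.single a 1 + ε • Pi.single (a + 1) 1)

lemma ghz_eq_ghzState (n : ℕ) : ghz n = ghzState 0 1 := by
  funext f
  simp only [ghz, ghzState, zero_add, one_smul, Pi.smul_apply, Pi.add_apply, Pi.single_apply,
    smul_eq_mul]
  rfl

def signedShift (s : Fin 2) (φ ε : ℂ) : Matrix (Fin 2) (Fin 2) ℂ :=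
  Matrix.of fun f x => if f = s + x then φ * ε ^ (x : ℕ) else 0

lemma pauliSet_eq_signedShift :
    pauliSet = {signedShift 0 1 1, signedShift 1 1 1, signedShift 1 Complex.I (-1),
      signedShift 0 1 (-1)} := by
  obtain ⟨hI, hX, hY, hZ⟩ : pI = signedShift 0 1 1 ∧ pX = signedShift 1 1 1 ∧
      pY = signedShift 1 Complex.I (-1) ∧ pZ = signedShift 0 1 (-1) := by
    refine ⟨?_, ?_, ?_, ?_⟩ <;> ext f x <;> fin_cases f <;> fin_cases x <;>
      simp [pI, pX, pY, pZ, signedShift]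
  rw [pauliSet, hI, hX, hY, hZ]

lemma exists_signedShift_of_mem_pauliSet {P : Matrix (Fin 2) (Fin 2) ℂ} (hP : P ∈ pauliSet) :
    ∃ s φ ε, ‖φ‖ = 1 ∧ ε * ε = 1 ∧ P = signedShift s φ ε := by
  rw [pauliSet_eq_signedShift] at hP
  rcases hP with rfl | rfl | rfl | rfl <;> exact ⟨_, _, _, by simp, by ring, rfl⟩

lemma exists_signedShift_mem_pauliSet (s : Fin 2) {ε : ℂ} (hε : ε * ε = 1) :
    ∃ φ, ‖φ‖ = 1 ∧ signedShift s φ ε ∈ pauliSet := by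
  rw [pauliSet_eq_signedShift]
  rcases mul_self_eq_one_iff.mp hε with rfl | rfl <;> fin_cases s
  exacts [⟨1, by simp, by simp⟩, ⟨1, by simp, by simp⟩, ⟨1, by simp, by simp⟩,
    ⟨Complex.I, by simp, by simp⟩]

lemma kron_signedShift_mulVec_single (s : ι → Fin 2) (φ ε : ι → ℂ) (g : ι → Fin 2) :
    kron (fun i => signedShift (s i) (φ i) (ε i)) *ᵥ Pi.single g 1 =
      (∏ i, φ i * ε i ^ (g i : ℕ)) • Pi.single (s + g) 1 := by
  funext f
  simp [kron, signedShift, Finset.prod_ite_zero, Pi.single_apply, funext_iff]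

lemma kron_signedShift_mulVec_ghzState (s : ι → Fin 2) (φ ε : ι → ℂ) :
    kron (fun i => signedShift (s i) (φ i) (ε i)) *ᵥ ghzState 0 1 =
      (∏ i, φ i) • ghzState s (∏ i, ε i) := by
  simp only [ghzState, mulVec_smul, mulVec_add, one_smul, kron_signedShift_mulVec_single]
  simp only [smul_add, smul_smul, Pi.zero_apply, Fin.val_zero, pow_zero, mul_one,
    zero_add, Pi.one_apply, Fin.val_one, pow_one, Finset.prod_mul_distrib, add_zero]
  module

end SignedShift

section GHZBasis

variable {n : ℕ}

lemma IsGHZBasis.exists_eq_smul_ghzState {v : QState (Fin n)} (hv : IsGHZBasis v) :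
    ∃ (a : Fin n → Fin 2) (φ ε : ℂ), ‖φ‖ = 1 ∧ ε * ε = 1 ∧ v = φ • ghzState a ε := by
  obtain ⟨M, ⟨P, hP, rfl⟩, rfl⟩ := hv
  choose s φ ε hφ hε hPs using fun i => exists_signedShift_of_mem_pauliSet (hP i)
  refine ⟨s, ∏ i, φ i, ∏ i, ε i, by simp [hφ], by simp [← Finset.prod_mul_distrib, hε], ?_⟩
  rw [ghz_eq_ghzState, show P = _ from funext hPs, kron_signedShift_mulVec_ghzState]

-- The sign `ε` is carried by the Pauli factor on qubit `0`, so a qubit must exist.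
lemma exists_isGHZBasis_smul_eq_ghzState (hn : 0 < n) (a : Fin n → Fin 2) {ε : ℂ}
    (hε : ε * ε = 1) :
    ∃ v : QState (Fin n), IsGHZBasis v ∧ ∃ μ : ℂ, ‖μ‖ = 1 ∧ μ • v = ghzState a ε := by
  let ε' : Fin n → ℂ := Pi.mulSingle ⟨0, hn⟩ ε
  have hε' (i : Fin n) : ε' i * ε' i = 1 := by
    by_cases hi : i = ⟨0, hn⟩ <;> simp [ε', hi, hε]
  choose φ hφ hP using fun i => exists_signedShift_mem_pauliSet (a i) (hε' i)
  refine ⟨_, ⟨_, ⟨_, hP, rfl⟩, rfl⟩, (∏ i, φ i)⁻¹, by simp [hφ], ?_⟩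
  rw [ghz_eq_ghzState, kron_signedShift_mulVec_ghzState, Fintype.prod_pi_mulSingle', smul_smul,
    inv_mul_cancel₀ (by simp [← norm_ne_zero_iff, hφ]), one_smul]

end GHZBasis

section TwoCopies

variable {n : ℕ}

lemma tensor2_add_left (u u' v : QState (Fin n)) :
    tensor2 (u + u') v = tensor2 u v + tensor2 u' v := by
  funext f; simp [tensor2, add_mul]

lemma tensor2_add_right (u v v' : QState (Fin n)) :
    tensor2 u (v + v') = tensor2 u v + tensor2 u v' := by
  funext f; simp [tensor2, mul_add]

lemma tensor2_smul_left (c : ℂ) (u v : QState (Fin n)) :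
    tensor2 (c • u) v = c • tensor2 u v := by
  funext f; simp [tensor2, mul_assoc]

lemma tensor2_smul_right (c : ℂ) (u v : QState (Fin n)) :
    tensor2 u (c • v) = c • tensor2 u v := by
  funext f; simp [tensor2, mul_left_comm]

lemma tensor2_single (a b : Fin n → Fin 2) :
    tensor2 (Pi.single a 1) (Pi.single b 1) = Pi.single (Sum.elim a b) 1 := by
  funext f
  have hf : f = Sum.elim a b ↔ (fun i => f (.inl i)) = a ∧ (fun i => f (.inr i)) = b := by
    refine ⟨by rintro rfl; simp, ?_⟩
    rintro ⟨rfl, rfl⟩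
    funext x; cases x <;> rfl
  simp only [tensor2, Pi.single_apply, ite_zero_mul_ite_zero, mul_one, hf]

lemma hC₁_mulVec_single (a b : Fin n → Fin 2) :
    hC₁ n *ᵥ Pi.single (Sum.elim a b) 1 = Pi.single (Sum.elim a (b + a)) 1 := by
  funext f
  simp only [mulVec_single_one, col_apply, hC₁, Pi.single_apply, Sum.elim_inl, Sum.elim_inr]
  rfl

lemma hC₂_mulVec_single (a b : Fin n → Fin 2) :
    hC₂ n *ᵥ Pi.single (Sum.elim a b) 1 = Pi.single (Sum.elim (a + b) b) 1 := by
  funext f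
  simp only [mulVec_single_one, col_apply, hC₂, Pi.single_apply, Sum.elim_inl, Sum.elim_inr]
  rfl

lemma hC₁_mulVec_tensor2_ghzState (a b : Fin n → Fin 2) (ε : ℂ) {η : ℂ} (hη : η * η = 1) :
    hC₁ n *ᵥ tensor2 (ghzState a ε) (ghzState b η) =
      tensor2 (ghzState a (ε * η)) (ghzState (a + b) η) := by
  simp only [ghzState, tensor2_add_left, tensor2_add_right, tensor2_smul_left, tensor2_smul_right,
    tensor2_single, mulVec_add, mulVec_smul, hC₁_mulVec_single]
  rw [show b + (a + 1) = a + b + 1 by abel, show b + 1 + (a + 1) = a + b by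
      rw [add_add_add_comm, one_add_one_eq_zero_of_fin_two, add_zero, add_comm],
    show b + a = a + b from add_comm b a, show b + 1 + a = a + b + 1 by abel]
  set c : ℂ := (Real.sqrt 2 : ℂ)⁻¹
  linear_combination (norm := module)
    (-(c * c * ε) * hη) • Pi.single (a + 1 ⊕ᵥ (a + b + 1)) (1 : ℂ)

lemma hC₂_mulVec_tensor2_ghzState (a b : Fin n → Fin 2) {ε : ℂ} (hε : ε * ε = 1) (η : ℂ) :
    hC₂ n *ᵥ tensor2 (ghzState a ε) (ghzState b η) =
      tensor2 (ghzState (a + b) ε) (ghzState b (ε * η)) := by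
  simp only [ghzState, tensor2_add_left, tensor2_add_right, tensor2_smul_left, tensor2_smul_right,
    tensor2_single, mulVec_add, mulVec_smul, hC₂_mulVec_single]
  rw [show a + 1 + b = a + b + 1 by abel, show a + 1 + (b + 1) = a + b by
      rw [add_add_add_comm, one_add_one_eq_zero_of_fin_two, add_zero],
    show a + (b + 1) = a + b + 1 by abel]
  set c : ℂ := (Real.sqrt 2 : ℂ)⁻¹
  linear_combination (norm := module)
    (-(c * c * η) * hε) • Pi.single (a + b + 1 ⊕ᵥ (b + 1)) (1 : ℂ)

lemma GHZPreserving2.of_mulVec_tensor2_ghzState (hn : 0 < n) {U : QOp (Fin n ⊕ Fin n)}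
    (hU : ∀ (a b : Fin n → Fin 2) (ε η : ℂ), ε * ε = 1 → η * η = 1 →
      ∃ (a' b' : Fin n → Fin 2) (ε' η' : ℂ), ε' * ε' = 1 ∧ η' * η' = 1 ∧
        U *ᵥ tensor2 (ghzState a ε) (ghzState b η) = tensor2 (ghzState a' ε') (ghzState b' η')) :
    GHZPreserving2 U := by
  intro u v hu hv
  obtain ⟨a, φ, ε, hφ, hε, rfl⟩ := hu.exists_eq_smul_ghzState
  obtain ⟨b, ψ, η, hψ, hη, rfl⟩ := hv.exists_eq_smul_ghzState
  obtain ⟨a', b', ε', η', hε', hη', hUab⟩ := hU a b ε η hε hη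
  obtain ⟨u', hu', μ, hμ, hu'a'⟩ := exists_isGHZBasis_smul_eq_ghzState hn a' hε'
  obtain ⟨v', hv', ν, hν, hv'b'⟩ := exists_isGHZBasis_smul_eq_ghzState hn b' hη'
  refine ⟨u', v', hu', hv', φ * ψ * (μ * ν), by simp [hφ, hψ, hμ, hν], ?_⟩
  rw [tensor2_smul_left, tensor2_smul_right, mulVec_smul, mulVec_smul, hUab, ← hu'a', ← hv'b',
    tensor2_smul_left, tensor2_smul_right]
  module

end TwoCopies

/-- STATEMENT 8: both H-generators (homogeneous CNOTs across all nodes of the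
two-copy system) are GHZ-preserving. -/
theorem stmt8 (n : ℕ) (hn : 2 ≤ n) :
    GHZPreserving2 (hC₁ n) ∧ GHZPreserving2 (hC₂ n) := by
  have hn₀ : 0 < n := by omega
  have sign_mul {ε η : ℂ} (hε : ε * ε = 1) (hη : η * η = 1) : ε * η * (ε * η) = 1 := by
    rw [mul_mul_mul_comm, hε, hη, one_mul]
  refine ⟨.of_mulVec_tensor2_ghzState hn₀ fun a b ε η hε hη => ?_,
    .of_mulVec_tensor2_ghzState hn₀ fun a b ε η hε hη => ?_⟩
  · exact ⟨a, a + b, ε * η, η, sign_mul hε hη, hη, hC₁_mulVec_tensor2_ghzState a b ε hη⟩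
  · exact ⟨a + b, b, ε, ε * η, hε, sign_mul hε hη, hC₂_mulVec_tensor2_ghzState a b hε η⟩
end
end
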